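/- arXiv:1711.00143 — 2 statements merged into one kernel-verified Lean document; each statement's English description precedes it below -/
import Mathlib

section
/- Let 0 < α < 1/2, λ > 0, u₀ ∈ ℝ, and f : ℝ≥0 × ℝ → ℝ with 0 < c₁ ≤ f(s,x) for all s, x. Suppose u : (0,β) → ℝ is continuous with β < ∞, satisfies u(t) = u₀ + (λ/Γ(2α)) ∫₀ᵗ (t−s)^{2α−1} f(s,u(s))/(∫₀ᵗ f(x,u(x))dx)² ds on (0,β), and that f(s,u(s)) ≤ c₂ on (0,β). Then for any τ ∈ (0,β), u is bounded on [τ,β) by |u₀| + λ c₂ β^{2α}/((c₁τ)² Γ(2α+1)). -/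
open MeasureTheory

theorem stmt8 (α lam u₀ c₁ c₂ β : ℝ) (hα : 0 < α) (hα2 : α < 1/2)
    (hlam : 0 < lam) (hc₁ : 0 < c₁) (hβ : 0 < β)
    (f : ℝ → ℝ → ℝ) (hlb : ∀ s x, 0 ≤ s → c₁ ≤ f s x)
    (u : ℝ → ℝ) (hu : ContinuousOn u (Set.Ioo 0 β))
    (hub : ∀ s ∈ Set.Ioo (0:ℝ) β, f s (u s) ≤ c₂)
    (heq : ∀ t ∈ Set.Ioo (0:ℝ) β, u t =
      u₀ + (lam / Real.Gamma (2 * α)) *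
        ∫ s in (0:ℝ)..t, (t - s) ^ (2 * α - 1) * f s (u s) /
          (∫ x in (0:ℝ)..t, f x (u x)) ^ 2) :
    ∀ τ ∈ Set.Ioo (0:ℝ) β, ∀ t ∈ Set.Ico τ β,
      |u t| ≤ |u₀| + lam * c₂ * β ^ (2 * α) /
        ((c₁ * τ) ^ 2 * Real.Gamma (2 * α + 1)) := by
  intro τ hτ t ht
  obtain ⟨hτ0, hτβ⟩ := hτ
  obtain ⟨hτt, htβ⟩ := ht
  have ht0 : 0 < t := lt_of_lt_of_le hτ0 hτt
  have htmem : t ∈ Set.Ioo (0:ℝ) β := ⟨ht0, htβ⟩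
  have hc₂ : 0 < c₂ := lt_of_lt_of_le hc₁ (le_trans (hlb τ (u τ) hτ0.le) (hub τ ⟨hτ0, hτβ⟩))
  have h2α : 0 < 2 * α := by linarith
  have hΓ : 0 < Real.Gamma (2 * α) := Real.Gamma_pos_of_pos h2α
  have hΓ1 : Real.Gamma (2 * α + 1) = 2 * α * Real.Gamma (2 * α) :=
    Real.Gamma_add_one (ne_of_gt h2α)
  have hΓ1pos : 0 < Real.Gamma (2 * α + 1) := by rw [hΓ1]; positivity
  have hrhs : 0 ≤ lam * c₂ * β ^ (2 * α) / ((c₁ * τ) ^ 2 * Real.Gamma (2 * α + 1)) := by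
    positivity
  set D : ℝ := ∫ x in (0:ℝ)..t, f x (u x) with hD
  by_cases hint : IntervalIntegrable (fun x => f x (u x)) volume 0 t
  · -- main case
    have hDt : c₁ * t ≤ D := by
      have : ∫ x in (0:ℝ)..t, c₁ ≤ D := by
        apply intervalIntegral.integral_mono_on ht0.le (intervalIntegrable_const) hint
        intro x hx
        exact hlb x (u x) hx.1
      simpa [mul_comm] using this
    have hDτ : c₁ * τ ≤ D := le_trans (by nlinarith) hDt
    have hDpos : 0 < D := lt_of_lt_of_le (by positivity) hDτ
    have hD2 : (c₁ * τ) ^ 2 ≤ D ^ 2 := by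
      apply pow_le_pow_left₀ (by positivity) hDτ
    -- the integrand bound
    set C : ℝ := c₂ / (c₁ * τ) ^ 2 with hC
    have hCpos : 0 < C := by positivity
    have hIint : IntervalIntegrable (fun s => (t - s) ^ (2 * α - 1) * C) volume 0 t := by
      apply IntervalIntegrable.mul_const
      have := (intervalIntegral.intervalIntegrable_rpow' (a := 0) (b := t) (r := 2 * α - 1)
        (by linarith)).comp_sub_left t
      simpa using this.symm
    have hIbound : (∫ s in (0:ℝ)..t, (t - s) ^ (2 * α - 1) * f s (u s) / D ^ 2)
        ≤ ∫ s in (0:ℝ)..t, (t - s) ^ (2 * α - 1) * C := by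
      rw [intervalIntegral.integral_of_le ht0.le, intervalIntegral.integral_of_le ht0.le]
      apply integral_mono_of_nonneg
      · filter_upwards [ae_restrict_mem measurableSet_Ioc] with s hs
        have h1 : (0:ℝ) ≤ (t - s) ^ (2 * α - 1) := Real.rpow_nonneg (by linarith [hs.2]) _
        have h2 : 0 ≤ f s (u s) := le_trans hc₁.le (hlb s (u s) hs.1.le)
        positivity
      · exact (intervalIntegrable_iff_integrableOn_Ioc_of_le ht0.le).mp hIint
      · filter_upwards [ae_restrict_mem measurableSet_Ioc] with s hs
        have h1 : (0:ℝ) ≤ (t - s) ^ (2 * α - 1) := Real.rpow_nonneg (by linarith [hs.2]) _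
        have hsβ : s ∈ Set.Ioo (0:ℝ) β := ⟨hs.1, lt_of_le_of_lt hs.2 htβ⟩
        have h2 : f s (u s) ≤ c₂ := hub s hsβ
        rw [div_le_iff₀ (by positivity)]
        have hc2eq : c₂ = C * (c₁ * τ) ^ 2 := by rw [hC]; field_simp
        calc (t - s) ^ (2 * α - 1) * f s (u s)
            ≤ (t - s) ^ (2 * α - 1) * c₂ := mul_le_mul_of_nonneg_left h2 h1
          _ = (t - s) ^ (2 * α - 1) * (C * (c₁ * τ) ^ 2) := by rw [← hc2eq]
          _ ≤ (t - s) ^ (2 * α - 1) * (C * D ^ 2) :=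
              mul_le_mul_of_nonneg_left (mul_le_mul_of_nonneg_left hD2 hCpos.le) h1
          _ = (t - s) ^ (2 * α - 1) * C * D ^ 2 := by ring
    have hIval : (∫ s in (0:ℝ)..t, (t - s) ^ (2 * α - 1) * C) = t ^ (2 * α) / (2 * α) * C := by
      rw [intervalIntegral.integral_mul_const]
      have h1 : (∫ s in (0:ℝ)..t, (t - s) ^ (2 * α - 1))
          = ∫ s in (0:ℝ)..t, s ^ (2 * α - 1) := by
        have := intervalIntegral.integral_comp_sub_left (a := 0) (b := t)
          (fun x => x ^ (2 * α - 1)) t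
        simpa using this
      rw [h1, integral_rpow (Or.inl (by linarith))]
      rw [Real.zero_rpow (by linarith)]
      ring_nf
    have hInn : 0 ≤ (∫ s in (0:ℝ)..t, (t - s) ^ (2 * α - 1) * f s (u s) / D ^ 2) := by
      rw [intervalIntegral.integral_of_le ht0.le]
      apply setIntegral_nonneg measurableSet_Ioc
      intro s hs
      have h1 : (0:ℝ) ≤ (t - s) ^ (2 * α - 1) := Real.rpow_nonneg (by linarith [hs.2]) _
      have h2 : 0 ≤ f s (u s) := le_trans hc₁.le (hlb s (u s) hs.1.le)
      positivity
    rw [heq t htmem]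
    have habs : |u₀ + (lam / Real.Gamma (2 * α)) *
        ∫ s in (0:ℝ)..t, (t - s) ^ (2 * α - 1) * f s (u s) / D ^ 2|
        ≤ |u₀| + (lam / Real.Gamma (2 * α)) * (t ^ (2 * α) / (2 * α) * C) := by
      refine le_trans (abs_add_le _ _) ?_
      have h5 : |(lam / Real.Gamma (2 * α)) *
          ∫ s in (0:ℝ)..t, (t - s) ^ (2 * α - 1) * f s (u s) / D ^ 2|
          ≤ (lam / Real.Gamma (2 * α)) * (t ^ (2 * α) / (2 * α) * C) := by
        rw [abs_mul, abs_of_nonneg (le_of_lt (by positivity : (0:ℝ) < lam / Real.Gamma (2*α))),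
          abs_of_nonneg hInn]
        exact mul_le_mul_of_nonneg_left (le_trans hIbound (le_of_eq hIval)) (by positivity)
      linarith
    refine le_trans habs ?_
    gcongr |u₀| + ?_
    have htβ' : t ^ (2 * α) ≤ β ^ (2 * α) :=
      Real.rpow_le_rpow ht0.le htβ.le h2α.le
    rw [hΓ1, hC]
    rw [div_mul_eq_mul_div, div_le_div_iff₀ (by positivity) (by positivity)]
    have key : lam * (t ^ (2*α) / (2*α) * (c₂ / (c₁*τ)^2)) * ((c₁*τ)^2 * (2*α*Real.Gamma (2*α)))
        = lam * c₂ * t ^ (2*α) * Real.Gamma (2*α) := by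
      field_simp
    rw [key]
    have : lam * c₂ * t ^ (2*α) * Real.Gamma (2*α) ≤ lam * c₂ * β ^ (2*α) * Real.Gamma (2*α) := by
      gcongr
    linarith
  · -- junk case: D = 0
    have hD0 : (∫ x in (0:ℝ)..t, f x (u x)) = 0 := intervalIntegral.integral_undef hint
    have : u t = u₀ := by
      rw [heq t htmem, hD0]
      simp
    rw [this]
    linarith
end

section
/- Let 0 < α < 1/2, λ > 0, u₀ ∈ ℝ, and suppose f : ℝ≥0 × ℝ → ℝ is continuous and there exist positive constants c₁, c₃, c₄, c₅ with c₁ ≤ f(s,x) and c₃ ≤ |f(s,x)| ≤ c₄|x| + c₅ for all s, x. If u : (0,β) → ℝ is a continuous solution of u(t) = u₀ + (λ/Γ(2α)) ∫₀ᵗ (t−s)^{2α−1} f(s,u(s))/(∫₀ᵗ f(x,u(x))dx)² ds with β < ∞, then for every τ ∈ (0,β), u is bounded on [τ,β). -/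
open MeasureTheory Set Filter Topology

/-! For `t ≥ τ` the denominator `∫₀ᵗ f(s, u s) ds` is at least `c₁ τ`, so
`|u t| ≤ |u₀| + C ∫₀ᵗ (t - s)^(2α-1) f(s, u s) ds` with `C = λ / (Γ(2α) (c₁ τ)²)`.
Split this integral at `τ/2` and at `p = β - δ`: on `[0, τ/2]` the kernel is at most
`(τ/2)^(2α-1)`, on `[τ/2, p]` the function `u` is bounded by compactness, and on `[p, t]` the
linear growth of `f` contributes `C c₄ S δ^(2α)/(2α)`, where `S` bounds `|u|` on `[p, t]`.
For `δ` small this coefficient of `S` is below `1`, and evaluating the estimate at a maximum point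
of `|u|` on `[p, t]` bounds `u` uniformly in `t < β` (in place of the generalized Gronwall
inequality). -/

section RiemannLiouvilleKernel

variable {r t : ℝ}

theorem intervalIntegrable_sub_rpow (hr : 0 < r) (x y : ℝ) :
    IntervalIntegrable (fun s => (t - s) ^ (r - 1)) volume x y := by
  simpa using (intervalIntegral.intervalIntegrable_rpow' (r := r - 1) (by linarith)
    (a := t - x) (b := t - y)).comp_sub_left t

theorem continuousOn_sub_rpow {x y : ℝ} (hyt : y < t) :
    ContinuousOn (fun s => (t - s) ^ (r - 1)) (Icc x y) := fun _ hs =>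
  ((continuous_const.sub continuous_id).continuousAt.rpow_const
    (Or.inl (sub_pos.2 (hs.2.trans_lt hyt)).ne')).continuousWithinAt

theorem intervalIntegrable_sub_rpow_mul {g : ℝ → ℝ} {x y : ℝ} (hr : 0 < r) (hxy : x ≤ y)
    (hg : ContinuousOn g (Icc x y)) :
    IntervalIntegrable (fun s => (t - s) ^ (r - 1) * g s) volume x y :=
  (intervalIntegrable_sub_rpow hr x y).mul_continuousOn (by rwa [uIcc_of_le hxy])

theorem integral_sub_rpow_le (hr : 0 < r) {x y : ℝ} (hyt : y ≤ t) :
    ∫ s in x..y, (t - s) ^ (r - 1) ≤ (t - x) ^ r / r := by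
  rw [intervalIntegral.integral_comp_sub_left (fun z => z ^ (r - 1)) t,
    integral_rpow (Or.inl (by linarith)), sub_add_cancel]
  have : 0 ≤ (t - y) ^ r := Real.rpow_nonneg (by linarith) _
  gcongr
  linarith

theorem integral_sub_rpow_mul_le {g : ℝ → ℝ} {x y B : ℝ} (hr : 0 < r) (hxy : x ≤ y)
    (hyt : y ≤ t) (hgc : ContinuousOn g (Icc x y)) (hg0 : ∀ s ∈ Icc x y, 0 ≤ g s)
    (hgB : ∀ s ∈ Icc x y, g s ≤ B) :
    ∫ s in x..y, (t - s) ^ (r - 1) * g s ≤ B * ((t - x) ^ r / r) := by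
  have hB : 0 ≤ B := (hg0 x ⟨le_rfl, hxy⟩).trans (hgB x ⟨le_rfl, hxy⟩)
  calc ∫ s in x..y, (t - s) ^ (r - 1) * g s
      ≤ ∫ s in x..y, (t - s) ^ (r - 1) * B :=
        intervalIntegral.integral_mono_on hxy (intervalIntegrable_sub_rpow_mul hr hxy hgc)
          ((intervalIntegrable_sub_rpow hr x y).mul_const B) fun s hs =>
            mul_le_mul_of_nonneg_left (hgB s hs) (Real.rpow_nonneg (by linarith [hs.2]) _)
    _ = B * ∫ s in x..y, (t - s) ^ (r - 1) := by
        rw [intervalIntegral.integral_mul_const, mul_comm]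
    _ ≤ B * ((t - x) ^ r / r) := by gcongr; exact integral_sub_rpow_le hr hyt

theorem IntervalIntegrable.sub_rpow_mul {g : ℝ → ℝ} {x y : ℝ} (hxy : x ≤ y) (hyt : y < t)
    (hgi : IntervalIntegrable g volume x y) :
    IntervalIntegrable (fun s => (t - s) ^ (r - 1) * g s) volume x y :=
  hgi.continuousOn_mul (by rw [uIcc_of_le hxy]; exact continuousOn_sub_rpow hyt)

theorem integral_sub_rpow_mul_le_of_lt {g : ℝ → ℝ} {x y : ℝ} (hr : r ≤ 1) (hxy : x ≤ y)
    (hyt : y < t) (hgi : IntervalIntegrable g volume x y) (hg0 : ∀ s ∈ Icc x y, 0 ≤ g s) :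
    ∫ s in x..y, (t - s) ^ (r - 1) * g s ≤ (t - y) ^ (r - 1) * ∫ s in x..y, g s := by
  rw [← intervalIntegral.integral_const_mul]
  refine intervalIntegral.integral_mono_on hxy (hgi.sub_rpow_mul hxy hyt) (hgi.const_mul _)
    fun s hs => mul_le_mul_of_nonneg_right ?_ (hg0 s hs)
  exact Real.rpow_le_rpow_of_nonpos (by linarith) (by linarith [hs.2]) (by linarith)

theorem integral_sub_rpow_mul_le_split {g : ℝ → ℝ} {x a p B₁ B₂ : ℝ} (hr : 0 < r) (hr1 : r ≤ 1)
    (hxa : x ≤ a) (hap : a ≤ p) (hpt : p ≤ t) (hat : a < t)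
    (hgi : IntervalIntegrable g volume x a) (hgc : ContinuousOn g (Icc a t))
    (hg0 : ∀ s ∈ Icc x t, 0 ≤ g s)
    (hB₁ : ∀ s ∈ Icc a p, g s ≤ B₁) (hB₂ : ∀ s ∈ Icc p t, g s ≤ B₂) :
    ∫ s in x..t, (t - s) ^ (r - 1) * g s ≤
      (t - a) ^ (r - 1) * (∫ s in x..a, g s) + B₁ * ((t - a) ^ r / r) + B₂ * ((t - p) ^ r / r) := by
  have hgc₁ : ContinuousOn g (Icc a p) := hgc.mono (Icc_subset_Icc_right hpt)
  have hgc₂ : ContinuousOn g (Icc p t) := hgc.mono (Icc_subset_Icc_left hap)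
  have hxa' := hgi.sub_rpow_mul (r := r) hxa hat
  have hap' := intervalIntegrable_sub_rpow_mul (t := t) hr hap hgc₁
  have hpt' := intervalIntegrable_sub_rpow_mul (t := t) hr hpt hgc₂
  have hleft := integral_sub_rpow_mul_le_of_lt hr1 hxa hat hgi fun s hs =>
    hg0 s ⟨hs.1, by linarith [hs.2]⟩
  have hmid := integral_sub_rpow_mul_le hr hap hpt hgc₁
    (fun s hs => hg0 s ⟨by linarith [hs.1], by linarith [hs.2]⟩) hB₁
  have hright := integral_sub_rpow_mul_le hr hpt le_rfl hgc₂
    (fun s hs => hg0 s ⟨by linarith [hs.1], hs.2⟩) hB₂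
  rw [← intervalIntegral.integral_add_adjacent_intervals hxa' (hap'.trans hpt'),
    ← intervalIntegral.integral_add_adjacent_intervals hap' hpt']
  linarith

end RiemannLiouvilleKernel

theorem integral_mul_div_sq_integral_le {k g : ℝ → ℝ} {t c d : ℝ} (ht : 0 ≤ t) (hd : 0 < d)
    (hdt : d ≤ c * t) (hk : ∀ s ∈ Icc 0 t, 0 ≤ k s) (hg : ∀ s ∈ Icc 0 t, c ≤ g s)
    (hgi : IntervalIntegrable g volume 0 t) :
    ∫ s in (0:ℝ)..t, k s * g s / (∫ x in (0:ℝ)..t, g x) ^ 2 ≤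
      (∫ s in (0:ℝ)..t, k s * g s) / d ^ 2 := by
  have hD : d ≤ ∫ x in (0:ℝ)..t, g x := by
    calc d ≤ ∫ _ in (0:ℝ)..t, c := by simpa [mul_comm] using hdt
      _ ≤ _ := intervalIntegral.integral_mono_on ht intervalIntegrable_const hgi hg
  have hc : 0 < c := pos_of_mul_pos_left (hd.trans_le hdt) ht
  rw [intervalIntegral.integral_div]
  exact div_le_div_of_nonneg_left
    (intervalIntegral.integral_nonneg ht fun s hs => mul_nonneg (hk s hs) (hc.le.trans (hg s hs)))
    (pow_pos hd 2) (pow_le_pow_left₀ hd.le hD 2)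

theorem le_div_one_sub_of_le_add_mul_bound {φ : ℝ → ℝ} {p t A ε : ℝ} (hpt : p ≤ t)
    (hφ : ContinuousOn φ (Icc p t)) (hε : ε < 1)
    (h : ∀ s ∈ Icc p t, ∀ S, (∀ x ∈ Icc p s, φ x ≤ S) → φ s ≤ A + ε * S) :
    φ t ≤ A / (1 - ε) := by
  obtain ⟨s₀, hs₀, hmax⟩ := isCompact_Icc.exists_isMaxOn (nonempty_Icc.2 hpt) hφ
  have hs₀A := h s₀ hs₀ (φ s₀) fun x hx => hmax ⟨hx.1, hx.2.trans hs₀.2⟩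
  have ht : φ t ≤ φ s₀ := hmax ⟨hpt, le_rfl⟩
  rw [le_div_iff₀ (sub_pos.2 hε)]
  nlinarith

theorem exists_pos_le_mul_rpow_lt_one {r b K : ℝ} (hr : 0 < r) (hb : 0 < b) :
    ∃ δ, 0 < δ ∧ δ ≤ b ∧ K * δ ^ r < 1 := by
  have hlim : Tendsto (fun δ => K * δ ^ r) (𝓝[>] 0) (𝓝 0) := by
    have hcont : Continuous fun δ : ℝ => K * δ ^ r :=
      continuous_const.mul (Real.continuous_rpow_const hr.le)
    exact (hcont.tendsto' 0 0 (by simp [Real.zero_rpow hr.ne'])).mono_left nhdsWithin_le_nhds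
  obtain ⟨δ, hδ1, hδ⟩ := ((hlim.eventually_lt_const one_pos).and (Ioc_mem_nhdsGT hb)).exists
  exact ⟨δ, hδ.1, hδ.2, hδ1⟩

section VolterraEquation

variable {α lam u₀ c₁ c₄ c₅ β : ℝ} {f : ℝ → ℝ → ℝ} {u : ℝ → ℝ}

theorem abs_le_of_volterra_eq (hα : 0 < α) (hlam : 0 ≤ lam) (hc₁ : 0 < c₁)
    (hlb : ∀ s x, 0 ≤ s → c₁ ≤ f s x) {τ t : ℝ} (hτ : 0 < τ) (hτt : τ ≤ t)
    (hut : u t = u₀ + (lam / Real.Gamma (2 * α)) *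
        ∫ s in (0:ℝ)..t, (t - s) ^ (2 * α - 1) * f s (u s) / (∫ x in (0:ℝ)..t, f x (u x)) ^ 2)
    (hgi : IntervalIntegrable (fun s => f s (u s)) volume 0 t) :
    |u t| ≤ |u₀| + lam / Real.Gamma (2 * α) / (c₁ * τ) ^ 2 *
      ∫ s in (0:ℝ)..t, (t - s) ^ (2 * α - 1) * f s (u s) := by
  have ht : 0 ≤ t := hτ.le.trans hτt
  have hL : 0 ≤ lam / Real.Gamma (2 * α) :=
    div_nonneg hlam (Real.Gamma_pos_of_pos (by linarith)).le
  have hI := integral_mul_div_sq_integral_le (k := fun s => (t - s) ^ (2 * α - 1)) ht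
    (by positivity) (mul_le_mul_of_nonneg_left hτt hc₁.le)
    (fun s hs => Real.rpow_nonneg (by linarith [hs.2]) _) (fun s hs => hlb s (u s) hs.1) hgi
  have hI0 : 0 ≤ ∫ s in (0:ℝ)..t,
      (t - s) ^ (2 * α - 1) * f s (u s) / (∫ x in (0:ℝ)..t, f x (u x)) ^ 2 :=
    intervalIntegral.integral_nonneg ht fun s hs =>
      div_nonneg (mul_nonneg (Real.rpow_nonneg (by linarith [hs.2]) _)
        (hc₁.le.trans (hlb s (u s) hs.1))) (sq_nonneg _)
  rw [hut]
  calc _ ≤ |u₀| + |lam / Real.Gamma (2 * α) * ∫ s in (0:ℝ)..t,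
        (t - s) ^ (2 * α - 1) * f s (u s) / (∫ x in (0:ℝ)..t, f x (u x)) ^ 2| := abs_add_le _ _
    _ ≤ |u₀| + lam / Real.Gamma (2 * α) *
        ((∫ s in (0:ℝ)..t, (t - s) ^ (2 * α - 1) * f s (u s)) / (c₁ * τ) ^ 2) := by
      rw [abs_of_nonneg (mul_nonneg hL hI0)]
      gcongr
    _ = _ := by ring

theorem exists_abs_le_add_mul_of_volterra_eq (hα : 0 < α) (hα2 : α < 1 / 2) (hlam : 0 ≤ lam)
    (hc₁ : 0 < c₁) (hc₄ : 0 ≤ c₄) (hf : Continuous (fun p : ℝ × ℝ => f p.1 p.2))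
    (hlb : ∀ s x, 0 ≤ s → c₁ ≤ f s x) (hgrowth : ∀ s x, 0 ≤ s → |f s x| ≤ c₄ * |x| + c₅)
    (hu : ContinuousOn u (Ioo 0 β))
    (heq : ∀ t ∈ Ioo (0:ℝ) β, u t = u₀ + (lam / Real.Gamma (2 * α)) *
        ∫ s in (0:ℝ)..t, (t - s) ^ (2 * α - 1) * f s (u s) / (∫ x in (0:ℝ)..t, f x (u x)) ^ 2)
    {τ δ M : ℝ} (hτ : 0 < τ) (hτδ : τ ≤ β - δ) (hM : ∀ s ∈ Icc (τ / 2) (β - δ), |u s| ≤ M) :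
    ∃ A, ∀ t ∈ Ico (β - δ) β, ∀ S, (∀ s ∈ Icc (β - δ) t, |u s| ≤ S) →
      |u t| ≤ A + lam / Real.Gamma (2 * α) / (c₁ * τ) ^ 2 * c₄ / (2 * α) * δ ^ (2 * α) * S := by
  set C := lam / Real.Gamma (2 * α) / (c₁ * τ) ^ 2
  set K := ∫ s in (0:ℝ)..τ / 2, f s (u s)
  have hr : 0 < 2 * α := by linarith
  have hC : 0 ≤ C := by
    have := Real.Gamma_pos_of_pos hr
    positivity
  have hK : 0 ≤ K := intervalIntegral.integral_nonneg (by linarith) fun s hs =>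
    hc₁.le.trans (hlb s (u s) hs.1)
  have hf_le : ∀ s, 0 ≤ s → ∀ B, |u s| ≤ B → f s (u s) ≤ c₄ * B + c₅ := fun s hs B hB =>
    (le_abs_self _).trans ((hgrowth s (u s) hs).trans (by gcongr))
  refine ⟨|u₀| + C * ((τ / 2) ^ (2 * α - 1) * K + (c₄ * M + c₅) * (β ^ (2 * α) / (2 * α)) +
    c₅ * (δ ^ (2 * α) / (2 * α))), ?_⟩
  rintro t ⟨hpt, htβ⟩ S hS
  have ht : t ∈ Ioo 0 β := ⟨by linarith, htβ⟩
  have hB₁ : 0 ≤ c₄ * M + c₅ :=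
    (hc₁.le.trans (hlb _ (u τ) hτ.le)).trans (hf_le _ hτ.le M (hM τ ⟨by linarith, hτδ⟩))
  have hB₂ : 0 ≤ c₄ * S + c₅ :=
    (hc₁.le.trans (hlb _ (u t) ht.1.le)).trans (hf_le _ ht.1.le S (hS t ⟨hpt, le_rfl⟩))
  suffices |u t| ≤ |u₀| + C * ((τ / 2) ^ (2 * α - 1) * K +
      (c₄ * M + c₅) * (β ^ (2 * α) / (2 * α)) + (c₄ * S + c₅) * (δ ^ (2 * α) / (2 * α))) from
    this.trans_eq (by ring)
  by_cases hgi : IntervalIntegrable (fun s => f s (u s)) volume 0 t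
  swap
  · -- the denominator is then the junk value `0`
    have hu₀ : u t = u₀ := by
      rw [heq t ht, intervalIntegral.integral_undef hgi]
      simp
    rw [hu₀]
    refine le_add_of_nonneg_right (mul_nonneg hC ?_)
    have : 0 ≤ β := by linarith
    have : 0 ≤ δ := by linarith
    positivity
  have hsplit := integral_sub_rpow_mul_le_split (t := t) (r := 2 * α) (x := 0) (a := τ / 2)
    (p := β - δ) hr (by linarith) (by linarith) (by linarith) hpt (by linarith)
    (hgi.mono_set (uIcc_subset_uIcc_left (mem_uIcc_of_le (by linarith) (by linarith))))
    (hf.comp_continuousOn (continuousOn_id.prodMk (hu.mono (Icc_subset_Ioo (by linarith) htβ))))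
    (fun s hs => hc₁.le.trans (hlb s (u s) hs.1))
    (fun s hs => hf_le s (by linarith [hs.1]) M (hM s hs))
    (fun s hs => hf_le s (by linarith [hs.1]) S (hS s hs))
  have hτpow : (t - τ / 2) ^ (2 * α - 1) ≤ (τ / 2) ^ (2 * α - 1) :=
    Real.rpow_le_rpow_of_nonpos (by linarith) (by linarith) (by linarith)
  have hβpow : (t - τ / 2) ^ (2 * α) ≤ β ^ (2 * α) := by gcongr <;> linarith
  have hδpow : (t - (β - δ)) ^ (2 * α) ≤ δ ^ (2 * α) := by gcongr; linarith
  calc |u t| ≤ |u₀| + C * ∫ s in (0:ℝ)..t, (t - s) ^ (2 * α - 1) * f s (u s) :=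
        abs_le_of_volterra_eq hα hlam hc₁ hlb hτ (by linarith) (heq t ht) hgi
    _ ≤ _ := by
      gcongr
      refine hsplit.trans ?_
      gcongr

end VolterraEquation

theorem stmt18_general (α lam u₀ c₁ c₃ c₄ c₅ β : ℝ) (hα : 0 < α) (hα2 : α < 1/2)
    (hlam : 0 < lam) (hc₁ : 0 < c₁) (hc₄ : 0 < c₄)
    (f : ℝ → ℝ → ℝ) (hf : Continuous (fun p : ℝ × ℝ => f p.1 p.2))
    (hlb : ∀ s x, 0 ≤ s → c₁ ≤ f s x)
    (hgrowth : ∀ s x, 0 ≤ s → c₃ ≤ |f s x| ∧ |f s x| ≤ c₄ * |x| + c₅)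
    (u : ℝ → ℝ) (hu : ContinuousOn u (Set.Ioo 0 β))
    (heq : ∀ t ∈ Set.Ioo (0:ℝ) β, u t =
      u₀ + (lam / Real.Gamma (2 * α)) *
        ∫ s in (0:ℝ)..t, (t - s) ^ (2 * α - 1) * f s (u s) /
          (∫ x in (0:ℝ)..t, f x (u x)) ^ 2) :
    ∀ τ ∈ Set.Ioo (0:ℝ) β, ∃ B : ℝ, ∀ t ∈ Set.Ico τ β, |u t| ≤ B := by
  rintro τ ⟨hτ, hτβ⟩
  set K := lam / Real.Gamma (2 * α) / (c₁ * τ) ^ 2 * c₄ / (2 * α)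
  obtain ⟨δ, hδ, hδβ, hε⟩ := exists_pos_le_mul_rpow_lt_one (K := K) (by linarith : 0 < 2 * α)
    (sub_pos.2 hτβ)
  obtain ⟨M, hM⟩ := isCompact_Icc.exists_bound_of_continuousOn
    (hu.mono (Icc_subset_Ioo (half_pos hτ) (by linarith : β - δ < β)))
  simp only [Real.norm_eq_abs] at hM
  obtain ⟨A, hA⟩ := exists_abs_le_add_mul_of_volterra_eq hα hα2 hlam.le hc₁ hc₄.le hf hlb
    (fun s x hs => (hgrowth s x hs).2) hu heq hτ (by linarith) hM
  refine ⟨max M (A / (1 - K * δ ^ (2 * α))), fun t ⟨hτt, htβ⟩ => ?_⟩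
  rcases le_or_gt t (β - δ) with htp | htp
  · exact (hM t ⟨by linarith, htp⟩).trans (le_max_left _ _)
  · refine (le_div_one_sub_of_le_add_mul_bound htp.le ?_ hε
      fun s hs S hS => hA s ⟨hs.1, hs.2.trans_lt htβ⟩ S hS).trans (le_max_right _ _)
    exact (hu.mono (Icc_subset_Ioo (by linarith) htβ)).abs

theorem stmt18 (α lam u₀ c₁ c₃ c₄ c₅ β : ℝ) (hα : 0 < α) (hα2 : α < 1/2)
    (hlam : 0 < lam) (hc₁ : 0 < c₁) (hc₃ : 0 < c₃) (hc₄ : 0 < c₄)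
    (hc₅ : 0 < c₅) (hβ : 0 < β)
    (f : ℝ → ℝ → ℝ) (hf : Continuous (fun p : ℝ × ℝ => f p.1 p.2))
    (hlb : ∀ s x, 0 ≤ s → c₁ ≤ f s x)
    (hgrowth : ∀ s x, 0 ≤ s → c₃ ≤ |f s x| ∧ |f s x| ≤ c₄ * |x| + c₅)
    (u : ℝ → ℝ) (hu : ContinuousOn u (Set.Ioo 0 β))
    (heq : ∀ t ∈ Set.Ioo (0:ℝ) β, u t =
      u₀ + (lam / Real.Gamma (2 * α)) *
        ∫ s in (0:ℝ)..t, (t - s) ^ (2 * α - 1) * f s (u s) /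
          (∫ x in (0:ℝ)..t, f x (u x)) ^ 2) :
    ∀ τ ∈ Set.Ioo (0:ℝ) β, ∃ B : ℝ, ∀ t ∈ Set.Ico τ β, |u t| ≤ B :=
  stmt18_general α lam u₀ c₁ c₃ c₄ c₅ β hα hα2 hlam hc₁ hc₄ f hf hlb hgrowth u hu heq
end
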